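/- arXiv:1002.3746 — 7 statements merged into one kernel-verified Lean document; each statement's English description precedes it below -/
import Mathlib

section
/- Let η be a real random variable with E[e^{λ|η|}] < ∞ for some λ > 0, let (Q_k^{(η)})_{k≥0} be the Appell sequence associated with η, let μ_k = E[η^k] be the origo moments of η, and let κ_k be the k-th cumulant of η, i.e., the k-th derivative at u = 0 of the cumulant function K(u) = log E[e^{uη}]. Then for every m ≥ 0, κ_{m+1} = Σ_{k=0}^{m} C(m,k) · μ_{k+1} · Q_{m-k}^{(η)}(0). -/
open MeasureTheory Polynomial

open MeasureTheory Polynomial Filter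

/-- Iterated derivative of a function with an explicit derivative chain on an open set. -/
lemma chain_iteratedDeriv {s : Set ℝ} (hs : IsOpen s) (f : ℕ → ℝ → ℝ)
    (hf : ∀ n, ∀ x ∈ s, HasDerivAt (f n) (f (n + 1) x) x) :
    ∀ n, ∀ x ∈ s, iteratedDeriv n (f 0) x = f n x := by
  intro n
  induction n with
  | zero => intro x hx; simp [iteratedDeriv_zero]
  | succ n ih =>
    intro x hx
    rw [iteratedDeriv_succ]
    have heq : iteratedDeriv n (f 0) =ᶠ[nhds x] f n :=
      eventuallyEq_of_mem (hs.mem_nhds hx) (fun y hy => ih y hy)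
    rw [heq.deriv_eq]
    exact (hf n x hx).deriv

/-- A function with a derivative chain on an open set is `C^n` there for every `n`. -/
lemma chain_contDiffOn {s : Set ℝ} (hs : IsOpen s) :
    ∀ (n : ℕ) (f : ℕ → ℝ → ℝ),
      (∀ m, ∀ x ∈ s, HasDerivAt (f m) (f (m + 1) x) x) → ContDiffOn ℝ n (f 0) s := by
  intro n
  induction n with
  | zero =>
    intro f hf
    refine (contDiffOn_zero).2 ?_
    intro x hx
    exact ((hf 0 x hx).continuousAt).continuousWithinAt
  | succ n ih =>
    intro f hf
    rw [show ((n + 1 : ℕ) : WithTop ℕ∞) = (n : WithTop ℕ∞) + 1 by norm_cast]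
    rw [contDiffOn_succ_iff_deriv_of_isOpen hs]
    refine ⟨fun x hx => ((hf 0 x hx).differentiableAt).differentiableWithinAt, ?_, ?_⟩
    · intro h; exact absurd h (by simp)
    · have := ih (fun m => f (m + 1)) (fun m x hx => hf (m + 1) x hx)
      exact this.congr (fun x hx => (hf 0 x hx).deriv)

lemma iteratedDerivWithin_of_isOpen' {s : Set ℝ} (hs : IsOpen s) (f : ℝ → ℝ) (n : ℕ)
    {x : ℝ} (hx : x ∈ s) : iteratedDerivWithin n f s x = iteratedDeriv n f x := by
  rw [iteratedDerivWithin_eq_iteratedFDerivWithin, iteratedDeriv_eq_iteratedFDeriv,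
    iteratedFDerivWithin_of_isOpen n hs hx]

lemma hasDerivAt_iteratedDeriv_of_contDiffOn {s : Set ℝ} (hs : IsOpen s) {f : ℝ → ℝ}
    (hf : ContDiffOn ℝ (((⊤:ℕ∞)) : WithTop ℕ∞) f s) (n : ℕ) {x : ℝ} (hx : x ∈ s) :
    HasDerivAt (iteratedDeriv n f) (iteratedDeriv (n + 1) f x) x := by
  have h1 : DifferentiableWithinAt ℝ (iteratedDerivWithin n f s) s x :=
    hf.differentiableOn_iteratedDerivWithin (by exact_mod_cast lt_top_iff_ne_top.mpr (by simp : (n:ℕ∞) ≠ ⊤))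
      hs.uniqueDiffOn x hx
  have heq : iteratedDerivWithin n f s =ᶠ[nhds x] iteratedDeriv n f :=
    eventuallyEq_of_mem (hs.mem_nhds hx) (fun y hy => iteratedDerivWithin_of_isOpen' hs f n hy)
  have h3 : DifferentiableAt ℝ (iteratedDeriv n f) x :=
    (h1.differentiableAt (hs.mem_nhds hx)).congr_of_eventuallyEq heq.symm
  rw [iteratedDeriv_succ]
  exact h3.hasDerivAt

lemma iteratedDeriv_one_fun (n : ℕ) (x : ℝ) :
    iteratedDeriv (n + 1) (fun _ : ℝ => (1 : ℝ)) x = 0 := by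
  induction n generalizing x with
  | zero => simp [iteratedDeriv_succ', deriv_const]
  | succ m ih =>
    rw [iteratedDeriv_succ]
    have h : iteratedDeriv (m + 1) (fun _ : ℝ => (1:ℝ)) = fun _ => 0 := funext fun y => ih y
    rw [h]
    simp

/-- Leibniz: product of two chains has an explicit derivative chain. -/
lemma chain_mul {s : Set ℝ} (f g : ℕ → ℝ → ℝ)
    (hf : ∀ n, ∀ x ∈ s, HasDerivAt (f n) (f (n + 1) x) x)
    (hg : ∀ n, ∀ x ∈ s, HasDerivAt (g n) (g (n + 1) x) x) :
    ∀ n, ∀ x ∈ s, HasDerivAt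
      (fun y => ∑ k ∈ Finset.range (n + 1), (n.choose k : ℝ) * f k y * g (n - k) y)
      (∑ k ∈ Finset.range (n + 2), ((n + 1).choose k : ℝ) * f k x * g (n + 1 - k) x) x := by
  intro n x hx
  have h : HasDerivAt
      (fun y => ∑ k ∈ Finset.range (n + 1), (n.choose k : ℝ) * f k y * g (n - k) y)
      (∑ k ∈ Finset.range (n + 1), ((n.choose k : ℝ) * (f (k + 1) x * g (n - k) x)
        + (n.choose k : ℝ) * (f k x * g (n - k + 1) x))) x := by
    apply HasDerivAt.fun_sum
    intro k _
    have h1 := ((hf k x hx).fun_mul (hg (n - k) x hx)).const_mul ((n.choose k : ℝ))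
    simp only [mul_add] at h1
    simpa only [← mul_assoc] using h1
  convert h using 1
  rw [Finset.sum_add_distrib]
  have hB : ∑ k ∈ Finset.range (n + 1), (n.choose k : ℝ) * (f k x * g (n - k + 1) x)
      = (∑ k ∈ Finset.range (n + 1), (n.choose (k + 1) : ℝ) * (f (k + 1) x * g (n - k) x))
        + f 0 x * g (n + 1) x := by
    have e1 : ∀ k ∈ Finset.range (n + 1), (n.choose k : ℝ) * (f k x * g (n - k + 1) x)
        = (n.choose k : ℝ) * (f k x * g (n + 1 - k) x) := by
      intro k hk
      rw [Finset.mem_range] at hk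
      rw [Nat.succ_sub (Nat.lt_succ_iff.mp hk)]
    rw [Finset.sum_congr rfl e1]
    have e2 : ∑ k ∈ Finset.range (n + 2), (n.choose k : ℝ) * (f k x * g (n + 1 - k) x)
        = ∑ k ∈ Finset.range (n + 1), (n.choose k : ℝ) * (f k x * g (n + 1 - k) x) := by
      rw [Finset.sum_range_succ, Nat.choose_eq_zero_of_lt (Nat.lt_succ_self n)]
      simp
    rw [← e2, Finset.sum_range_succ']
    simp [Nat.succ_sub_succ]
  rw [hB]
  have hsplit : ∑ k ∈ Finset.range (n + 2), ((n + 1).choose k : ℝ) * f k x * g (n + 1 - k) x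
      = (∑ k ∈ Finset.range (n + 1), ((n + 1).choose (k + 1) : ℝ) * (f (k + 1) x * g (n - k) x))
        + f 0 x * g (n + 1) x := by
    rw [Finset.sum_range_succ']
    simp [Nat.succ_sub_succ, mul_assoc]
  rw [hsplit]
  have e4 : ∀ k ∈ Finset.range (n + 1), ((n + 1).choose (k + 1) : ℝ) *
      (f (k + 1) x * g (n - k) x)
      = (n.choose k : ℝ) * (f (k + 1) x * g (n - k) x)
        + (n.choose (k + 1) : ℝ) * (f (k + 1) x * g (n - k) x) := by
    intro k _
    rw [Nat.choose_succ_succ, Nat.cast_add, add_mul]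
  rw [Finset.sum_congr rfl e4, Finset.sum_add_distrib]
  ring

/-- Uniqueness of the binomial-convolution inverse sequence. -/
lemma seq_unique (a : ℕ → ℝ) (ha0 : a 0 = 1) (q r : ℕ → ℝ) (hq0 : q 0 = 1) (hr0 : r 0 = 1)
    (hq : ∀ j, 1 ≤ j → ∑ i ∈ Finset.range (j + 1), (j.choose i : ℝ) * a i * q (j - i) = 0)
    (hr : ∀ j, 1 ≤ j → ∑ i ∈ Finset.range (j + 1), (j.choose i : ℝ) * a i * r (j - i) = 0) :
    ∀ j, q j = r j := by
  intro j
  induction j using Nat.strong_induction_on with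
  | _ j ih =>
    match j with
    | 0 => rw [hq0, hr0]
    | (j + 1) =>
      have Hq := hq (j + 1) (Nat.le_add_left 1 j)
      have Hr := hr (j + 1) (Nat.le_add_left 1 j)
      rw [Finset.sum_range_succ'] at Hq Hr
      simp only [Nat.choose_zero_right, Nat.cast_one, one_mul, ha0, Nat.sub_zero] at Hq Hr
      have hsum : ∑ i ∈ Finset.range (j + 1), ((j + 1).choose (i + 1) : ℝ) * a (i + 1)
            * q (j + 1 - (i + 1))
          = ∑ i ∈ Finset.range (j + 1), ((j + 1).choose (i + 1) : ℝ) * a (i + 1)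
            * r (j + 1 - (i + 1)) := by
        apply Finset.sum_congr rfl
        intro i hi
        rw [ih (j + 1 - (i + 1)) (by omega)]
      linarith [Hq, Hr, hsum.symm ▸ Hq]

lemma appell_coeff (Q : ℕ → Polynomial ℝ) (hQ0 : Q 0 = 1)
    (hQderiv : ∀ k, 1 ≤ k → derivative (Q k) = (k : ℝ) • Q (k - 1)) :
    ∀ j i, (Q j).coeff i = (j.choose i : ℝ) * (Q (j - i)).eval 0 := by
  intro j
  induction j with
  | zero =>
    intro i
    cases i with
    | zero => simp [hQ0]
    | succ i => simp [hQ0, coeff_one, Nat.choose_eq_zero_of_lt (Nat.succ_pos i)]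
  | succ j ih =>
    intro i
    cases i with
    | zero =>
      rw [coeff_zero_eq_eval_zero]
      simp
    | succ i =>
      have hd := hQderiv (j + 1) (Nat.le_add_left 1 j)
      have hcoeff : (derivative (Q (j + 1))).coeff i = ((j + 1 : ℕ) : ℝ) * (Q j).coeff i := by
        rw [hd]; simp
      rw [coeff_derivative] at hcoeff
      have hIH := ih i
      have hcast : ((j + 1 : ℕ) : ℝ) * ((j.choose i : ℕ) : ℝ)
          = (((j + 1).choose (i + 1) : ℕ) : ℝ) * ((i + 1 : ℕ) : ℝ) := by
        rw [← Nat.cast_mul, ← Nat.cast_mul, Nat.add_one_mul_choose_eq]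
      have hi1 : ((i : ℝ) + 1) ≠ 0 := by positivity
      have key : (Q (j + 1)).coeff (i + 1) * ((i : ℝ) + 1)
          = (((j + 1).choose (i + 1) : ℕ) : ℝ) * (Q (j - i)).eval 0 * ((i : ℝ) + 1) := by
        rw [hcoeff, hIH]
        push_cast at hcast ⊢
        linear_combination (Q (j - i)).eval 0 * hcast
      have key2 := mul_right_cancel₀ hi1 key
      have hji : j + 1 - (i + 1) = j - i := by omega
      rw [key2, hji]

/-- Pointwise bound: `|x^n e^{u x}| ≤ n! (4/λ)^n e^{λ|x|}` for `|u| ≤ 3λ/4`. -/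
lemma pow_mul_exp_bound {lam : ℝ} (hlam : 0 < lam) (n : ℕ) {u : ℝ} (hu : |u| ≤ 3 * lam / 4)
    (x : ℝ) : ‖x ^ n * Real.exp (u * x)‖ ≤
      (n.factorial : ℝ) * (4 / lam) ^ n * Real.exp (lam * |x|) := by
  have h1 : ‖x ^ n * Real.exp (u * x)‖ = |x| ^ n * Real.exp (u * x) := by
    simp [norm_mul, norm_pow, Real.norm_eq_abs, Real.abs_exp]
  rw [h1]
  have h2 : Real.exp (u * x) ≤ Real.exp (3 * lam / 4 * |x|) := by
    apply Real.exp_le_exp.mpr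
    calc u * x ≤ |u * x| := le_abs_self _
      _ = |u| * |x| := abs_mul u x
      _ ≤ 3 * lam / 4 * |x| := by
          apply mul_le_mul_of_nonneg_right hu (abs_nonneg x)
  have h3 : |x| ^ n ≤ (n.factorial : ℝ) * (4 / lam) ^ n * Real.exp (lam / 4 * |x|) := by
    have ht : (0:ℝ) ≤ lam / 4 * |x| := by positivity
    have := Real.pow_div_factorial_le_exp (x := lam / 4 * |x|) ht n
    rw [div_le_iff₀ (by positivity : (0:ℝ) < (n.factorial : ℝ))] at this
    have h4 : (lam / 4 * |x|) ^ n = (lam / 4) ^ n * |x| ^ n := mul_pow _ _ _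
    rw [h4] at this
    calc |x| ^ n = (4 / lam) ^ n * ((lam / 4) ^ n * |x| ^ n) := by
          rw [← mul_assoc, ← mul_pow, div_mul_div_comm, mul_comm (4:ℝ) lam, div_self (by positivity), one_pow, one_mul]
      _ ≤ (4 / lam) ^ n * (Real.exp (lam / 4 * |x|) * (n.factorial : ℝ)) := by
          apply mul_le_mul_of_nonneg_left this (by positivity)
      _ = (n.factorial : ℝ) * (4 / lam) ^ n * Real.exp (lam / 4 * |x|) := by ring
  calc |x| ^ n * Real.exp (u * x)
      ≤ ((n.factorial : ℝ) * (4 / lam) ^ n * Real.exp (lam / 4 * |x|))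
        * Real.exp (3 * lam / 4 * |x|) := by
        apply mul_le_mul h3 h2 (Real.exp_pos _).le (by positivity)
    _ = (n.factorial : ℝ) * (4 / lam) ^ n * Real.exp (lam * |x|) := by
        rw [mul_assoc, ← Real.exp_add]
        ring_nf

/-- Relation between cumulants, origo moments and Appell polynomials:
`κ_{m+1} = ∑_{k=0}^m C(m,k) μ_{k+1} Q_{m-k}(0)`, where `κ_j` is the `j`-th
cumulant (the `j`-th derivative at `0` of `K(u) = log E[e^{uη}]`) and
`μ_j = E[η^j]` is the `j`-th origo moment. -/
theorem cumulants_via_appell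
    {Ω : Type*} [MeasurableSpace Ω] (μ : Measure Ω) [IsProbabilityMeasure μ]
    (η : Ω → ℝ) (hη : Measurable η)
    (lam : ℝ) (hlam : 0 < lam)
    (hexp : Integrable (fun ω => Real.exp (lam * |η ω|)) μ)
    (Q : ℕ → Polynomial ℝ)
    (hQ0 : Q 0 = 1)
    (hQderiv : ∀ k, 1 ≤ k → derivative (Q k) = (k : ℝ) • Q (k - 1))
    (hQmean : ∀ k, 1 ≤ k → ∫ ω, (Q k).eval (η ω) ∂μ = 0)
    (K : ℝ → ℝ) (hK : ∀ u, K u = Real.log (∫ ω, Real.exp (u * η ω) ∂μ))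
    (κ : ℕ → ℝ) (hκ : ∀ k, κ k = iteratedDeriv k K 0)
    (μmom : ℕ → ℝ) (hμmom : ∀ k, μmom k = ∫ ω, (η ω) ^ k ∂μ) :
    ∀ m : ℕ,
      κ (m + 1)
        = ∑ k ∈ Finset.range (m + 1),
            (m.choose k : ℝ) * μmom (k + 1) * (Q (m - k)).eval 0 := by
  intro m
  set s : Set ℝ := Metric.ball (0 : ℝ) (lam / 2) with hs_def
  have hs : IsOpen s := Metric.isOpen_ball
  have h0s : (0 : ℝ) ∈ s := by
    simp only [hs_def, Metric.mem_ball, dist_self]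
    linarith
  set G : ℕ → ℝ → ℝ := fun n u => ∫ ω, η ω ^ n * Real.exp (u * η ω) ∂μ with hGdef
  -- measurability and integrability
  have hmeas : ∀ (n : ℕ) (u : ℝ),
      AEStronglyMeasurable (fun ω => η ω ^ n * Real.exp (u * η ω)) μ := fun n u =>
    ((hη.pow_const n).mul ((measurable_const.mul hη).exp)).aestronglyMeasurable
  have hint : ∀ (n : ℕ) (u : ℝ), |u| ≤ 3 * lam / 4 →
      Integrable (fun ω => η ω ^ n * Real.exp (u * η ω)) μ := by
    intro n u hu
    refine Integrable.mono (hexp.const_mul ((n.factorial : ℝ) * (4 / lam) ^ n)) (hmeas n u) ?_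
    filter_upwards with ω
    calc ‖η ω ^ n * Real.exp (u * η ω)‖
        ≤ (n.factorial : ℝ) * (4 / lam) ^ n * Real.exp (lam * |η ω|) :=
          pow_mul_exp_bound hlam n hu (η ω)
      _ ≤ ‖(n.factorial : ℝ) * (4 / lam) ^ n * Real.exp (lam * |η ω|)‖ := le_abs_self _
  -- derivative chain for G
  have hG : ∀ n, ∀ x ∈ s, HasDerivAt (G n) (G (n + 1) x) x := by
    intro n x hx
    have hx' : |x| < lam / 2 := by
      simpa [hs_def, Metric.mem_ball, Real.dist_eq] using hx
    have hε : (0 : ℝ) < lam / 4 := by linarith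
    have hder : ∀ (ω : Ω) (u : ℝ), HasDerivAt (fun t => η ω ^ n * Real.exp (t * η ω))
        (η ω ^ (n + 1) * Real.exp (u * η ω)) u := by
      intro ω u
      have h1 : HasDerivAt (fun t : ℝ => t * η ω) (η ω) u := by
        simpa using (hasDerivAt_id u).mul_const (η ω)
      have h2 := (h1.exp).const_mul (η ω ^ n)
      rw [show η ω ^ (n + 1) * Real.exp (u * η ω) = η ω ^ n * (Real.exp (u * η ω) * η ω) by rw [pow_succ]; ring]
      exact h2
    have hballu : ∀ u ∈ Metric.ball x (lam / 4), |u| ≤ 3 * lam / 4 := by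
      intro u hu
      rw [Metric.mem_ball, Real.dist_eq] at hu
      calc |u| = |u - x + x| := by ring_nf
        _ ≤ |u - x| + |x| := abs_add_le _ _
        _ ≤ 3 * lam / 4 := by linarith
    have key := hasDerivAt_integral_of_dominated_loc_of_deriv_le (μ := μ) (x₀ := x) (Metric.ball_mem_nhds x hε)
      (F := fun u ω => η ω ^ n * Real.exp (u * η ω))
      (F' := fun u ω => η ω ^ (n + 1) * Real.exp (u * η ω))
      (bound := fun ω => ((n + 1).factorial : ℝ) * (4 / lam) ^ (n + 1) * Real.exp (lam * |η ω|))
      (Eventually.of_forall fun u => hmeas n u)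
      (hint n x (by linarith [hx'.le]))
      (hmeas (n + 1) x)
      (Eventually.of_forall fun ω => fun u hu => pow_mul_exp_bound hlam (n + 1) (hballu u hu) (η ω))
      (hexp.const_mul _)
      (Eventually.of_forall fun ω => fun u _ => hder ω u)
    exact key.2
  -- smoothness of G 0 and of R
  have hG0cd : ContDiffOn ℝ (((⊤ : ℕ∞)) : WithTop ℕ∞) (G 0) s := by
    rw [contDiffOn_infty]
    exact fun n => chain_contDiffOn hs n G hG
  have hG0pos : ∀ x ∈ s, 0 < G 0 x := by
    intro x hx
    have hx' : |x| < lam / 2 := by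
      simpa [hs_def, Metric.mem_ball, Real.dist_eq] using hx
    have h0 := hint 0 x (by linarith)
    simp only [pow_zero, one_mul] at h0
    have hpos := ProbabilityTheory.mgf_pos (μ := μ) (X := η) (t := x) h0
    have : G 0 x = ProbabilityTheory.mgf η μ x := by
      simp only [hGdef, ProbabilityTheory.mgf, pow_zero, one_mul]
    rw [this]
    exact hpos
  set R : ℝ → ℝ := fun u => (G 0 u)⁻¹ with hRdef
  have hRcd : ContDiffOn ℝ (((⊤ : ℕ∞)) : WithTop ℕ∞) R s :=
    hG0cd.inv (fun x hx => (hG0pos x hx).ne')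
  set rch : ℕ → ℝ → ℝ := fun n => iteratedDeriv n R with hrchdef
  have hrch : ∀ n, ∀ x ∈ s, HasDerivAt (rch n) (rch (n + 1) x) x :=
    fun n x hx => hasDerivAt_iteratedDeriv_of_contDiffOn hs hRcd n hx
  have hrch0 : rch 0 = R := by
    funext y; simp [hrchdef, iteratedDeriv_zero]
  -- iterated derivatives of products
  have hprod : ∀ (f : ℕ → ℝ → ℝ), (∀ n, ∀ x ∈ s, HasDerivAt (f n) (f (n + 1) x) x) →
      ∀ n, ∀ x ∈ s, iteratedDeriv n (fun y => f 0 y * R y) x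
        = ∑ k ∈ Finset.range (n + 1), (n.choose k : ℝ) * f k x * rch (n - k) x := by
    intro f hf n x hx
    have hchain := chain_mul (s := s) f rch hf hrch
    have h := chain_iteratedDeriv hs
      (fun n y => ∑ k ∈ Finset.range (n + 1), (n.choose k : ℝ) * f k y * rch (n - k) y)
      hchain n x hx
    have h0 : (fun y => ∑ k ∈ Finset.range (0 + 1), ((0 : ℕ).choose k : ℝ) * f k y * rch (0 - k) y)
        = fun y => f 0 y * R y := by
      funext y
      simp [hrch0]
    rw [← h0]
    exact h
  -- value of G at 0
  have hGval : ∀ k, G k 0 = μmom k := by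
    intro k
    rw [hμmom k]
    simp only [hGdef, zero_mul, Real.exp_zero, mul_one]
  have hmom0 : μmom 0 = 1 := by
    rw [hμmom 0]
    simp
  -- the two sequences
  have hqq0 : (Q 0).eval 0 = 1 := by simp [hQ0]
  have hrr0 : rch 0 0 = 1 := by
    have hg : G 0 0 = 1 := by rw [hGval 0, hmom0]
    simp [hrch0, hRdef, hg]
  -- recursion for rr
  have hrrrec : ∀ j, 1 ≤ j →
      ∑ i ∈ Finset.range (j + 1), (j.choose i : ℝ) * μmom i * rch (j - i) 0 = 0 := by
    intro j hj
    have h1 := hprod G hG j 0 h0s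
    have heq : (fun y => G 0 y * R y) =ᶠ[nhds 0] (fun _ => (1 : ℝ)) :=
      eventuallyEq_of_mem (hs.mem_nhds h0s)
        (fun y hy => mul_inv_cancel₀ (hG0pos y hy).ne')
    obtain ⟨j', rfl⟩ : ∃ j', j = j' + 1 := ⟨j - 1, by omega⟩
    rw [heq.iteratedDeriv_eq (j' + 1), iteratedDeriv_one_fun j' 0] at h1
    calc ∑ i ∈ Finset.range (j' + 1 + 1), ((j' + 1).choose i : ℝ) * μmom i * rch (j' + 1 - i) 0
        = ∑ i ∈ Finset.range (j' + 1 + 1), ((j' + 1).choose i : ℝ) * G i 0 * rch (j' + 1 - i) 0 :=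
          Finset.sum_congr rfl (fun i _ => by rw [hGval i])
      _ = 0 := h1.symm
  -- recursion for qq
  have hqqrec : ∀ j, 1 ≤ j →
      ∑ i ∈ Finset.range (j + 1), (j.choose i : ℝ) * μmom i * (Q (j - i)).eval 0 = 0 := by
    intro j hj
    have hco := appell_coeff Q hQ0 hQderiv
    have hdeg : (Q j).natDegree < j + 1 := by
      refine Nat.lt_succ_of_le (natDegree_le_iff_coeff_eq_zero.mpr fun N hN => ?_)
      rw [hco j N, Nat.choose_eq_zero_of_lt hN]
      simp
    have hpowint : ∀ i : ℕ, Integrable (fun ω => η ω ^ i) μ := by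
      intro i
      have := hint i 0 (by rw [abs_zero]; positivity)
      simpa [Real.exp_zero] using this
    have hInt : ∫ ω, (Q j).eval (η ω) ∂μ
        = ∑ i ∈ Finset.range (j + 1), (Q j).coeff i * μmom i := by
      have heval : (fun ω => (Q j).eval (η ω))
          = fun ω => ∑ i ∈ Finset.range (j + 1), (Q j).coeff i * η ω ^ i := by
        funext ω
        exact eval_eq_sum_range' hdeg (η ω)
      rw [heval, integral_finset_sum _ (fun i _ => (hpowint i).const_mul _)]
      apply Finset.sum_congr rfl
      intro i _
      rw [integral_const_mul, hμmom i]
    have h0 := hQmean j hj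
    rw [hInt] at h0
    calc ∑ i ∈ Finset.range (j + 1), (j.choose i : ℝ) * μmom i * (Q (j - i)).eval 0
        = ∑ i ∈ Finset.range (j + 1), (Q j).coeff i * μmom i :=
          Finset.sum_congr rfl (fun i _ => by rw [hco j i]; ring)
      _ = 0 := h0
  have hqr : ∀ j, (Q j).eval 0 = rch j 0 :=
    seq_unique μmom hmom0 (fun j => (Q j).eval 0) (fun j => rch j 0) hqq0 hrr0 hqqrec hrrrec
  -- derivative of K
  have hKfun : K = fun u => Real.log (G 0 u) := by
    funext u
    rw [hK u]
    congr 1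
    simp only [hGdef, pow_zero, one_mul]
  have hKderiv : ∀ x ∈ s, HasDerivAt K (G 1 x * R x) x := by
    intro x hx
    have h := (hG 0 x hx).log (hG0pos x hx).ne'
    rw [div_eq_mul_inv] at h
    rw [hKfun]
    exact h
  -- final computation
  have hfinal : iteratedDeriv (m + 1) K 0
      = ∑ k ∈ Finset.range (m + 1), (m.choose k : ℝ) * G (k + 1) 0 * rch (m - k) 0 := by
    rw [iteratedDeriv_succ']
    have hdK : deriv K =ᶠ[nhds 0] fun y => G 1 y * R y :=
      eventuallyEq_of_mem (hs.mem_nhds h0s) (fun y hy => (hKderiv y hy).deriv)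
    rw [hdK.iteratedDeriv_eq m]
    exact hprod (fun k => G (k + 1)) (fun k x hx => hG (k + 1) x hx) m 0 h0s
  rw [hκ, hfinal]
  apply Finset.sum_congr rfl
  intro k _
  rw [hGval (k + 1), ← hqr (m - k)]
end

section
/- Let c > 0 and let M be an exponentially distributed random variable with rate c (density c·e^{−cx} on (0,∞)). Then for every n ≥ 1 and every z ∈ ℝ, E[(M + z − n/c) · (M + z)^{n−1}] = z^n; that is, the Appell polynomials associated with M are Q_n^{(M)}(x) = (x − n/c) · x^{n−1}. -/
open MeasureTheory

open Real Filter Asymptotics Topology in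
lemma aux_tendsto (c z : ℝ) (hc : 0 < c) (n : ℕ) :
    Filter.Tendsto (fun x : ℝ => (x + z) ^ n * Real.exp (-c * x)) Filter.atTop (nhds 0) := by
  have h1 : Tendsto (fun y : ℝ => y ^ n * Real.exp (-y)) atTop (nhds 0) :=
    tendsto_pow_mul_exp_neg_atTop_nhds_zero n
  have h2 : Tendsto (fun x : ℝ => c * (x + z)) atTop atTop := by
    apply Tendsto.const_mul_atTop hc
    exact tendsto_atTop_add_const_right _ z (tendsto_id)
  have h3 := (h1.comp h2).mul_const (Real.exp (c * z) / c ^ n)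
  rw [zero_mul] at h3
  convert h3 using 2 with x
  have hcn : (c : ℝ) ^ n ≠ 0 := pow_ne_zero _ hc.ne'
  field_simp [Function.comp, mul_pow, ← Real.exp_add]
  rw [show (-(x * c)) = (-(c * (x + z))) + z * c by ring, Real.exp_add]
  simp only [Function.comp_apply, mul_pow]
  ring

/-- The Appell polynomials of an exponentially distributed random variable `M`
with rate `c` are `Q_n(x) = (x - n/c) x^{n-1}`: the mean value property
`E[(M + z - n/c)(M + z)^{n-1}] = z^n` holds, the expectation being an integral
against the density `c e^{-c x}` on `(0, ∞)`. -/
theorem exponential_appell (c : ℝ) (hc : 0 < c) (n : ℕ) (hn : 1 ≤ n) (z : ℝ) :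
    ∫ x in Set.Ioi (0 : ℝ),
        (x + z - n / c) * (x + z) ^ (n - 1) * (c * Real.exp (-c * x))
      = z ^ n := by
  have hp : ∀ x : ℝ, (x + z) ^ n = (x + z) * (x + z) ^ (n - 1) := by
    intro x
    conv_lhs => rw [← Nat.succ_pred_eq_of_pos (Nat.lt_of_lt_of_le Nat.zero_lt_one hn)]
    rw [pow_succ, Nat.pred_eq_sub_one]; ring
  set f : ℝ → ℝ := fun x => -((x + z) ^ n * Real.exp (-c * x)) with hf
  set f' : ℝ → ℝ := fun x =>
    (x + z - n / c) * (x + z) ^ (n - 1) * (c * Real.exp (-c * x)) with hf'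
  have hderiv : ∀ x : ℝ, HasDerivAt f (f' x) x := by
    intro x
    have h1 : HasDerivAt (fun x : ℝ => (x + z) ^ n) (n * (x + z) ^ (n - 1)) x := by
      simpa [Function.comp_def] using (hasDerivAt_pow n (x + z)).comp x ((hasDerivAt_id x).add_const z)
    have h2 : HasDerivAt (fun x : ℝ => Real.exp (-c * x)) (-c * Real.exp (-c * x)) x := by
      simpa [mul_comm] using ((hasDerivAt_id x).const_mul (-c)).exp
    have h := (h1.mul h2).neg
    refine h.congr_deriv ?_
    rw [hf', hp x]
    field_simp
    ring
  have hcont : Continuous f' := by fun_prop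
  have hint : IntegrableOn f' (Set.Ioi (0 : ℝ)) := by
    apply integrable_of_isBigO_exp_neg (half_pos hc) hcont.continuousOn
    set g : ℝ → ℝ := fun x =>
      (x + z - n / c) * (x + z) ^ (n - 1) * (c * Real.exp (-(c / 2) * x)) with hg_def
    have hg : Filter.Tendsto g Filter.atTop (nhds 0) := by
      have hA := aux_tendsto (c / 2) z (half_pos hc) n
      have hB := (aux_tendsto (c / 2) z (half_pos hc) (n - 1)).const_mul ((n : ℝ) / c)
      have h3 := (hA.sub hB).const_mul c
      simp only [mul_zero, sub_zero, zero_sub, neg_zero] at h3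
      convert h3 using 2 with x
      rw [hg_def]
      simp only [hp x]
      field_simp
    have heq : f' = fun x => g x * Real.exp (-(c / 2) * x) := by
      funext x
      simp only [hf', hg_def]
      rw [show (-c * x) = (-(c / 2) * x) + (-(c / 2) * x) by ring, Real.exp_add]
      ring
    rw [heq]
    have h1 : g =O[Filter.atTop] (fun _ : ℝ => (1 : ℝ)) := hg.isBigO_one ℝ
    have h2 := h1.mul (Asymptotics.isBigO_refl (fun x : ℝ => Real.exp (-(c / 2) * x)) Filter.atTop)
    exact h2.congr (fun x => rfl) (fun x => one_mul _)
  have htend : Filter.Tendsto f Filter.atTop (nhds 0) := by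
    simpa [hf, neg_mul] using (aux_tendsto c z hc n).neg
  have := integral_Ioi_of_hasDerivAt_of_tendsto
    (f := f) (f' := f') (a := 0)
    (Continuous.continuousWithinAt (by fun_prop))
    (fun x _ => hderiv x) hint htend
  simpa [hf, hf'] using this
end

section
/- Let c > 0 and let η be a Laplace-distributed random variable with parameter c, i.e., with density (c/2)·e^{−c|x|} on ℝ. Then for every n ≥ 2 and every z ∈ ℝ, E[((η + z)² − n(n−1)/c²) · (η + z)^{n−2}] = z^n; that is, the Appell polynomials associated with η are Q_n^{(η)}(x) = (x² − n(n−1)/c²) · x^{n−2} for n ≥ 2 (and Q_0^{(η)}(x) = 1, Q_1^{(η)}(x) = x). -/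
open MeasureTheory

namespace LaplaceAux

open Set Real Finset

variable {c : ℝ}

lemma intHalf (hc : 0 < c) (k : ℕ) :
    IntegrableOn (fun x : ℝ => x ^ k * Real.exp (-c * x)) (Ioi 0) := by
  have h := integrableOn_rpow_mul_exp_neg_mul_rpow (p := 1) (s := (k : ℝ))
    (by exact_mod_cast neg_one_lt_zero.trans_le (Nat.cast_nonneg k)) one_pos hc
  refine h.congr_fun (fun x hx => ?_) measurableSet_Ioi
  simp only [Real.rpow_one, Real.rpow_natCast]

lemma intL (hc : 0 < c) (k : ℕ) :
    Integrable (fun x : ℝ => x ^ k * (c / 2 * Real.exp (-c * |x|))) := by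
  have hIoi : IntegrableOn (fun x : ℝ => x ^ k * (c / 2 * Real.exp (-c * |x|))) (Ioi 0) := by
    have h2 : IntegrableOn (fun x : ℝ => c / 2 * (x ^ k * Real.exp (-c * x))) (Ioi 0) :=
      (intHalf hc k).const_mul _
    refine h2.congr_fun (fun x hx => ?_) measurableSet_Ioi
    rw [abs_of_pos hx]; ring
  have hIic : IntegrableOn (fun x : ℝ => x ^ k * (c / 2 * Real.exp (-c * |x|))) (Iic 0) := by
    rw [← Measure.map_neg_eq_self (volume : Measure ℝ)]
    have m : MeasurableEmbedding fun x : ℝ => -x := (Homeomorph.neg ℝ).measurableEmbedding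
    rw [m.integrableOn_map_iff]
    simp_rw [Function.comp_def, neg_preimage, neg_Iic, neg_zero]
    rw [integrableOn_Ici_iff_integrableOn_Ioi]
    have h3 : IntegrableOn (fun x : ℝ => (-1 : ℝ) ^ k * (x ^ k * (c / 2 * Real.exp (-c * |x|))))
        (Ioi 0) := hIoi.const_mul _
    refine h3.congr_fun (fun x hx => ?_) measurableSet_Ioi
    rw [abs_neg, neg_pow]; ring
  have := hIic.union hIoi
  rwa [Iic_union_Ioi, integrableOn_univ] at this

lemma momentHalf (hc : 0 < c) (k : ℕ) :
    ∫ x in Ioi (0 : ℝ), x ^ k * Real.exp (-c * x) = (k.factorial : ℝ) / c ^ (k + 1) := by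
  have h := Real.integral_rpow_mul_exp_neg_mul_Ioi (a := (k : ℝ) + 1) (r := c)
    (by positivity) hc
  rw [Real.Gamma_nat_eq_factorial] at h
  rw [show ((k : ℝ) + 1) = ((k + 1 : ℕ) : ℝ) by push_cast; ring, Real.rpow_natCast] at h
  rw [show (∫ x in Ioi (0 : ℝ), x ^ k * Real.exp (-c * x))
      = ∫ t in Ioi (0 : ℝ), t ^ (((k + 1 : ℕ) : ℝ) - 1) * Real.exp (-(c * t)) from
    setIntegral_congr_fun measurableSet_Ioi fun x hx => by
      push_cast; rw [add_sub_cancel_right, Real.rpow_natCast, neg_mul], h, one_div, inv_pow]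
  field_simp

lemma moment (hc : 0 < c) (k : ℕ) :
    ∫ x : ℝ, x ^ k * (c / 2 * Real.exp (-c * |x|))
      = (1 + (-1 : ℝ) ^ k) / 2 * ((k.factorial : ℝ) / c ^ k) := by
  have hIoi : IntegrableOn (fun x : ℝ => x ^ k * (c / 2 * Real.exp (-c * |x|))) (Ioi 0) :=
    (intL hc k).integrableOn
  have hIic : IntegrableOn (fun x : ℝ => x ^ k * (c / 2 * Real.exp (-c * |x|))) (Iic 0) :=
    (intL hc k).integrableOn
  rw [← intervalIntegral.integral_Iic_add_Ioi hIic hIoi]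
  have hO : (∫ x in Ioi (0 : ℝ), x ^ k * (c / 2 * Real.exp (-c * |x|)))
      = c / 2 * ((k.factorial : ℝ) / c ^ (k + 1)) := by
    rw [show (∫ x in Ioi (0 : ℝ), x ^ k * (c / 2 * Real.exp (-c * |x|)))
        = ∫ x in Ioi (0 : ℝ), c / 2 * (x ^ k * Real.exp (-c * x)) from
      setIntegral_congr_fun measurableSet_Ioi fun x hx => by rw [abs_of_pos hx]; ring,
      MeasureTheory.integral_const_mul, momentHalf hc]
  have hI : (∫ x in Iic (0 : ℝ), x ^ k * (c / 2 * Real.exp (-c * |x|)))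
      = (-1 : ℝ) ^ k * (c / 2 * ((k.factorial : ℝ) / c ^ (k + 1))) := by
    have h := integral_comp_neg_Ioi (0 : ℝ)
      (fun x : ℝ => x ^ k * (c / 2 * Real.exp (-c * |x|)))
    rw [neg_zero] at h
    rw [← h, show (∫ x in Ioi (0 : ℝ), (-x) ^ k * (c / 2 * Real.exp (-c * |(-x)|)))
        = ∫ x in Ioi (0 : ℝ), (-1 : ℝ) ^ k * (c / 2) * (x ^ k * Real.exp (-c * x)) from
      setIntegral_congr_fun measurableSet_Ioi fun x hx => by
        rw [abs_neg, abs_of_pos hx, neg_pow]; ring,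
      MeasureTheory.integral_const_mul, momentHalf hc, mul_assoc]
  rw [hO, hI]
  have hcne : c ≠ 0 := hc.ne'
  field_simp
  ring

lemma hexp (m : ℕ) (z : ℝ) (x : ℝ) :
    (x + z) ^ m * (c / 2 * Real.exp (-c * |x|))
      = ∑ k ∈ Finset.range (m + 1),
          ((m.choose k : ℝ) * z ^ (m - k)) * (x ^ k * (c / 2 * Real.exp (-c * |x|))) := by
  rw [add_pow, Finset.sum_mul]
  refine Finset.sum_congr rfl fun k hk => ?_
  ring

lemma intJ (hc : 0 < c) (m : ℕ) (z : ℝ) :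
    Integrable (fun x : ℝ => (x + z) ^ m * (c / 2 * Real.exp (-c * |x|))) := by
  have h := integrable_finset_sum (μ := (volume : Measure ℝ)) (Finset.range (m + 1))
    (fun k _ => ((intL hc k).const_mul ((m.choose k : ℝ) * z ^ (m - k))))
  exact h.congr (Filter.EventuallyEq.symm (Filter.Eventually.of_forall (hexp m z)))

lemma Jval (hc : 0 < c) (m : ℕ) (z : ℝ) :
    ∫ x : ℝ, (x + z) ^ m * (c / 2 * Real.exp (-c * |x|))
      = ∑ k ∈ Finset.range (m + 1),
          (m.choose k : ℝ) * z ^ (m - k)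
            * ((1 + (-1 : ℝ) ^ k) / 2 * ((k.factorial : ℝ) / c ^ k)) := by
  simp_rw [hexp m z]
  rw [integral_finset_sum _
    (fun k _ => ((intL hc k).const_mul ((m.choose k : ℝ) * z ^ (m - k))))]
  refine Finset.sum_congr rfl fun k hk => ?_
  rw [MeasureTheory.integral_const_mul, moment hc]

lemma chooseId (m k : ℕ) :
    (m + 2).choose (k + 2) * ((k + 2) * (k + 1)) = (m + 2) * (m + 1) * m.choose k := by
  have h1 := Nat.add_one_mul_choose_eq m k
  have h2 := Nat.add_one_mul_choose_eq (m + 1) (k + 1)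
  calc (m + 2).choose (k + 2) * ((k + 2) * (k + 1))
      = ((m + 1 + 1).choose (k + 1 + 1) * (k + 1 + 1)) * (k + 1) := by ring
    _ = (Nat.succ (m + 1) * (m + 1).choose (k + 1)) * (k + 1) := by rw [h2]
    _ = (m + 2) * ((m + 1).choose (k + 1) * (k + 1)) := by
        rw [Nat.succ_eq_add_one]; ring
    _ = (m + 2) * (Nat.succ m * m.choose k) := by rw [h1]
    _ = (m + 2) * (m + 1) * m.choose k := by rw [Nat.succ_eq_add_one]; ring

lemma termId (hc : 0 < c) (m k : ℕ) (z : ℝ) :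
    ((m + 2).choose (k + 2) : ℝ) * z ^ (m - k)
        * ((1 + (-1 : ℝ) ^ (k + 2)) / 2 * (((k + 2).factorial : ℝ) / c ^ (k + 2)))
      = (m + 2 : ℝ) * ((m + 2 : ℝ) - 1) / c ^ 2
          * ((m.choose k : ℝ) * z ^ (m - k)
            * ((1 + (-1 : ℝ) ^ k) / 2 * ((k.factorial : ℝ) / c ^ k))) := by
  have hcne : c ≠ 0 := hc.ne'
  have hs : (-1 : ℝ) ^ (k + 2) = (-1 : ℝ) ^ k := by rw [pow_add]; norm_num
  have hnum : (((m + 2).choose (k + 2) : ℝ)) * ((k + 2).factorial : ℝ)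
      = ((m + 2) * (m + 1) : ℕ) * ((m.choose k : ℝ) * (k.factorial : ℝ)) := by
    have : ((m + 2).choose (k + 2) * (k + 2).factorial : ℕ)
        = ((m + 2) * (m + 1)) * (m.choose k * k.factorial) := by
      rw [Nat.factorial_succ, Nat.factorial_succ, show k + 1 + 1 = k + 2 from rfl]
      calc (m + 2).choose (k + 2) * ((k + 2) * ((k + 1) * k.factorial))
          = ((m + 2).choose (k + 2) * ((k + 2) * (k + 1))) * k.factorial := by ring
        _ = ((m + 2) * (m + 1) * m.choose k) * k.factorial := by rw [chooseId]
        _ = (m + 2) * (m + 1) * (m.choose k * k.factorial) := by ring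
    exact_mod_cast congrArg (fun t : ℕ => (t : ℝ)) this
  rw [hs]
  rw [show (c : ℝ) ^ (k + 2) = c ^ k * c ^ 2 from by rw [pow_add]]
  push_cast at hnum ⊢
  field_simp
  linear_combination (z ^ (m - k) * (1 + (-1 : ℝ) ^ k)) * hnum

end LaplaceAux

/-- The Appell polynomials of a Laplace-distributed random variable `η` with
parameter `c` (density `(c/2) e^{-c|x|}` on `ℝ`) are, for `n ≥ 2`,
`Q_n(x) = (x² - n(n-1)/c²) x^{n-2}`: the mean value property
`E[((η + z)² - n(n-1)/c²)(η + z)^{n-2}] = z^n` holds. -/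



theorem laplace_appell (c : ℝ) (hc : 0 < c) (n : ℕ) (hn : 2 ≤ n) (z : ℝ) :
    ∫ x : ℝ,
        ((x + z) ^ 2 - (n : ℝ) * ((n : ℝ) - 1) / c ^ 2) * (x + z) ^ (n - 2) *
          (c / 2 * Real.exp (-c * |x|))
      = z ^ n := by
  obtain ⟨m, rfl⟩ : ∃ m, n = m + 2 := ⟨n - 2, (Nat.sub_add_cancel hn).symm⟩
  set A : ℝ := ((m + 2 : ℕ) : ℝ) * (((m + 2 : ℕ) : ℝ) - 1) / c ^ 2 with hA
  have key : ∀ x : ℝ,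
      ((x + z) ^ 2 - A) * (x + z) ^ (m + 2 - 2) * (c / 2 * Real.exp (-c * |x|))
        = (x + z) ^ (m + 2) * (c / 2 * Real.exp (-c * |x|))
          - A * ((x + z) ^ m * (c / 2 * Real.exp (-c * |x|))) := by
    intro x
    rw [Nat.add_sub_cancel]
    ring
  rw [MeasureTheory.integral_congr_ae (Filter.Eventually.of_forall key),
    MeasureTheory.integral_sub (LaplaceAux.intJ hc (m + 2) z)
      ((LaplaceAux.intJ hc m z).const_mul A),
    MeasureTheory.integral_const_mul, LaplaceAux.Jval hc, LaplaceAux.Jval hc,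
    Finset.sum_range_succ' _ (m + 2), Finset.sum_range_succ' _ (m + 1), Finset.mul_sum]
  have hsum : ∑ k ∈ Finset.range (m + 1),
      ((m + 2).choose (k + 1 + 1) : ℝ) * z ^ (m + 2 - (k + 1 + 1)) *
        ((1 + (-1 : ℝ) ^ (k + 1 + 1)) / 2 * (((k + 1 + 1).factorial : ℝ) / c ^ (k + 1 + 1)))
      = ∑ k ∈ Finset.range (m + 1),
          A * ((m.choose k : ℝ) * z ^ (m - k)
            * ((1 + (-1 : ℝ) ^ k) / 2 * ((k.factorial : ℝ) / c ^ k))) := by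
    refine Finset.sum_congr rfl fun k hk => ?_
    have h := LaplaceAux.termId hc m k z
    rw [show k + 1 + 1 = k + 2 from rfl, show m + 2 - (k + 2) = m - k from by omega, h, hA]
    push_cast
    ring
  rw [hsum]
  norm_num [Nat.factorial]
end

section
/- Let c > 0 and m ≥ 2. Define for k ≥ 1 the polynomials Q_k^{M}(x) = (x − k/c)·x^{k−1} and Q_k^{I}(y) = (y + k/c)·y^{k−1}, with Q_0^{M} = Q_0^{I} = 1, and define Q_m^{X}(z) = (z² − m(m−1)/c²)·z^{m−2}. Then for all x, y ∈ ℝ, Q_m^{X}(x + y) = Σ_{k=0}^{m} C(m,k) · Q_k^{M}(x) · Q_{m-k}^{I}(y). (This verifies the factorization Q_m^{(X_T)}(x+y) = Σ C(m,k) Q_k^{(M_T)}(x) Q_{m−k}^{(I_T)}(y) for Brownian motion at an independent exponential time, where M_T ~ Exp(c), −I_T ~ Exp(c) and X_T is Laplace(c), with c = √(2r).) -/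
open Finset in
private lemma sumA (n : ℕ) (x y : ℝ) :
    ∑ k ∈ range (n + 1), (n.choose k : ℝ) * x ^ k * y ^ (n - k) = (x + y) ^ n := by
  rw [add_pow]
  exact sum_congr rfl fun k _ => by ring

open Finset in
private lemma sumB (n : ℕ) (x y : ℝ) :
    ∑ k ∈ range (n + 1), (k : ℝ) * (n.choose k : ℝ) * x ^ (k - 1) * y ^ (n - k)
      = n * (x + y) ^ (n - 1) := by
  cases n with
  | zero => simp
  | succ p =>
    rw [Finset.sum_range_succ']
    simp only [Nat.cast_zero, zero_mul, add_zero, Nat.add_sub_cancel]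
    have : ∀ i ∈ range (p + 1),
        ((i + 1 : ℕ) : ℝ) * ((p + 1).choose (i + 1) : ℝ) * x ^ i * y ^ (p + 1 - (i + 1))
          = (p + 1 : ℝ) * ((p.choose i : ℝ) * x ^ i * y ^ (p - i)) := by
      intro i _
      have h := Nat.add_one_mul_choose_eq p i
      have h' : ((i + 1 : ℕ) : ℝ) * ((p + 1).choose (i + 1) : ℝ) = (p + 1 : ℝ) * (p.choose i : ℝ) := by
        exact_mod_cast by rw [mul_comm]; exact_mod_cast h.symm
      rw [Nat.succ_sub_succ]
      calc ((i + 1 : ℕ) : ℝ) * ((p + 1).choose (i + 1) : ℝ) * x ^ i * y ^ (p - i)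
          = (((i + 1 : ℕ) : ℝ) * ((p + 1).choose (i + 1) : ℝ)) * (x ^ i * y ^ (p - i)) := by ring
        _ = (p + 1 : ℝ) * ((p.choose i : ℝ) * x ^ i * y ^ (p - i)) := by rw [h']; ring
    rw [Finset.sum_congr rfl this, ← Finset.mul_sum, sumA]
    push_cast; ring

open Finset in
private lemma sumC (n : ℕ) (x y : ℝ) :
    ∑ k ∈ range (n + 1), ((n - k : ℕ) : ℝ) * (n.choose k : ℝ) * x ^ k * y ^ (n - k - 1)
      = n * (x + y) ^ (n - 1) := by
  have hrefl := (Finset.sum_range_reflect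
    (fun k => ((n - k : ℕ) : ℝ) * (n.choose k : ℝ) * x ^ k * y ^ (n - k - 1)) (n + 1)).symm
  simp only [Nat.add_sub_cancel] at hrefl
  rw [hrefl]
  have : ∀ j ∈ range (n + 1),
      ((n - (n - j) : ℕ) : ℝ) * (n.choose (n - j) : ℝ) * x ^ (n - j) * y ^ (n - (n - j) - 1)
        = (j : ℝ) * (n.choose j : ℝ) * y ^ (j - 1) * x ^ (n - j) := by
    intro j hj
    have hjn : j ≤ n := Nat.lt_succ_iff.mp (mem_range.mp hj)
    rw [Nat.sub_sub_self hjn, Nat.choose_symm hjn]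
    ring
  rw [Finset.sum_congr rfl this, sumB]
  rw [add_comm y x]

open Finset in
private lemma sumD (n : ℕ) (x y : ℝ) :
    ∑ k ∈ range (n + 1),
        (k : ℝ) * ((n - k : ℕ) : ℝ) * (n.choose k : ℝ) * x ^ (k - 1) * y ^ (n - k - 1)
      = n * ((n : ℝ) - 1) * (x + y) ^ (n - 2) := by
  cases n with
  | zero => simp
  | succ p =>
    rw [Finset.sum_range_succ']
    simp only [Nat.cast_zero, zero_mul, add_zero, Nat.add_sub_cancel]
    have : ∀ i ∈ range (p + 1),
        ((i + 1 : ℕ) : ℝ) * ((p + 1 - (i + 1) : ℕ) : ℝ) * ((p + 1).choose (i + 1) : ℝ)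
            * x ^ i * y ^ (p + 1 - (i + 1) - 1)
          = (p + 1 : ℝ) * (((p - i : ℕ) : ℝ) * (p.choose i : ℝ) * x ^ i * y ^ (p - i - 1)) := by
      intro i _
      have h := Nat.add_one_mul_choose_eq p i
      have h' : ((i + 1 : ℕ) : ℝ) * ((p + 1).choose (i + 1) : ℝ) = (p + 1 : ℝ) * (p.choose i : ℝ) := by
        exact_mod_cast by rw [mul_comm]; exact_mod_cast h.symm
      rw [Nat.succ_sub_succ]
      calc ((i + 1 : ℕ) : ℝ) * ((p - i : ℕ) : ℝ) * ((p + 1).choose (i + 1) : ℝ) * x ^ i * y ^ (p - i - 1)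
          = (((i + 1 : ℕ) : ℝ) * ((p + 1).choose (i + 1) : ℝ)) * (((p - i : ℕ) : ℝ) * x ^ i * y ^ (p - i - 1)) := by ring
        _ = (p + 1 : ℝ) * (((p - i : ℕ) : ℝ) * (p.choose i : ℝ) * x ^ i * y ^ (p - i - 1)) := by rw [h']; ring
    rw [Finset.sum_congr rfl this, ← Finset.mul_sum, sumC]
    rcases p with _ | q
    · norm_num
    · have h1 : q + 1 + 1 - 2 = q + 1 - 1 := rfl
      rw [h1]
      push_cast
      ring

/-- Appell polynomials of an `Exp(c)` random variable: `Q_k^M(x) = (x - k/c) x^{k-1}`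
for `k ≥ 1` and `Q_0^M = 1`. -/
noncomputable def QM (c : ℝ) (k : ℕ) (x : ℝ) : ℝ :=
  if k = 0 then 1 else (x - k / c) * x ^ (k - 1)

/-- Appell polynomials of the negative of an `Exp(c)` random variable:
`Q_k^I(y) = (y + k/c) y^{k-1}` for `k ≥ 1` and `Q_0^I = 1`. -/
noncomputable def QI (c : ℝ) (k : ℕ) (y : ℝ) : ℝ :=
  if k = 0 then 1 else (y + k / c) * y ^ (k - 1)

/-- Appell polynomial of a `Laplace(c)` random variable:
`Q_m^X(z) = (z² - m(m-1)/c²) z^{m-2}`. -/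
noncomputable def QX (c : ℝ) (m : ℕ) (z : ℝ) : ℝ :=
  (z ^ 2 - (m : ℝ) * ((m : ℝ) - 1) / c ^ 2) * z ^ (m - 2)

private lemma QM_eq (c : ℝ) (k : ℕ) (x : ℝ) : QM c k x = x ^ k - (k : ℝ) / c * x ^ (k - 1) := by
  cases k with
  | zero => simp [QM]
  | succ p => simp only [QM, Nat.succ_ne_zero, if_false, Nat.add_sub_cancel, pow_succ]; push_cast; ring

private lemma QI_eq (c : ℝ) (k : ℕ) (y : ℝ) : QI c k y = y ^ k + (k : ℝ) / c * y ^ (k - 1) := by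
  cases k with
  | zero => simp [QI]
  | succ p => simp only [QI, Nat.succ_ne_zero, if_false, Nat.add_sub_cancel, pow_succ]; push_cast; ring

/-- The binomial convolution identity
`Q_m^X(x+y) = ∑_{k=0}^m C(m,k) Q_k^M(x) Q_{m-k}^I(y)` verifying the
Wiener–Hopf factorization for Brownian motion at an independent exponential
time. -/
theorem wiener_hopf_appell_factorization (c : ℝ) (hc : 0 < c) (m : ℕ) (hm : 2 ≤ m)
    (x y : ℝ) :
    QX c m (x + y)
      = ∑ k ∈ Finset.range (m + 1), (m.choose k : ℝ) * QM c k x * QI c (m - k) y := by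
  have step : ∀ k ∈ Finset.range (m + 1),
      (m.choose k : ℝ) * QM c k x * QI c (m - k) y
        = (m.choose k : ℝ) * x ^ k * y ^ (m - k)
          + (1 / c) * (((m - k : ℕ) : ℝ) * (m.choose k : ℝ) * x ^ k * y ^ (m - k - 1))
          - (1 / c) * ((k : ℝ) * (m.choose k : ℝ) * x ^ (k - 1) * y ^ (m - k))
          - (1 / c ^ 2) * ((k : ℝ) * ((m - k : ℕ) : ℝ) * (m.choose k : ℝ) * x ^ (k - 1) * y ^ (m - k - 1)) := by
    intro k _
    rw [QM_eq, QI_eq]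
    field_simp
    ring
  rw [Finset.sum_congr rfl step]
  rw [Finset.sum_sub_distrib, Finset.sum_sub_distrib, Finset.sum_add_distrib,
    ← Finset.mul_sum, ← Finset.mul_sum, ← Finset.mul_sum, sumA, sumB, sumC, sumD]
  obtain ⟨p, rfl⟩ : ∃ p, m = p + 2 := ⟨m - 2, (Nat.sub_add_cancel hm).symm⟩
  simp only [QX, Nat.add_sub_cancel]
  have h1 : p + 2 - 1 = p + 1 := rfl
  rw [h1]
  have hc' : c ≠ 0 := ne_of_gt hc
  push_cast
  field_simp
  ring
end

section
/- Let c > 0, n ≥ 1, and let x ∈ ℝ satisfy x ≤ n/c. Then ∫_{n/c}^{∞} (y − n/c) · y^{n−1} · c · e^{−c(y−x)} dy = (n/c)^n · e^{−n} · e^{cx}. (This computes the value function V(x) = E_x[Q_n^{(M_T)}(M_T); M_T ≥ n/c] of the optimal stopping problem with reward (x⁺)^n for a spectrally negative Lévy process, where M_T is exponentially distributed with rate c = Φ(r) and x*_n = n/c is the largest nonnegative root of Q_n^{(M_T)}.) -/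
open MeasureTheory

/-- The value function of the optimal stopping problem with reward `(x⁺)^n` for a
spectrally negative Lévy process: when the maximum `M_T` is exponentially
distributed with rate `c` and `x ≤ n/c`,
`∫_{n/c}^∞ (y - n/c) y^{n-1} c e^{-c(y-x)} dy = (n/c)^n e^{-n} e^{cx}`. -/
theorem value_function_spectrally_negative
    (c : ℝ) (hc : 0 < c) (n : ℕ) (hn : 1 ≤ n) (x : ℝ) (hx : x ≤ n / c) :
    ∫ y in Set.Ioi ((n : ℝ) / c),
        (y - n / c) * y ^ (n - 1) * (c * Real.exp (-c * (y - x)))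
      = ((n : ℝ) / c) ^ n * Real.exp (-(n : ℝ)) * Real.exp (c * x) := by
  set a : ℝ := (n : ℝ) / c with ha
  have hnpos : (0 : ℝ) < n := by exact_mod_cast hn
  have hapos : 0 < a := div_pos hnpos hc
  have hca : c * a = n := by rw [ha]; field_simp [hc.ne']
  set g : ℝ → ℝ := fun y => -(y ^ n * Real.exp (-c * (y - x))) with hg
  have hderiv : ∀ y ∈ Set.Ici a, HasDerivAt g
      ((y - a) * y ^ (n - 1) * (c * Real.exp (-c * (y - x)))) y := by
    intro y _
    have h1 : HasDerivAt (fun y : ℝ => y ^ n) ((n : ℝ) * y ^ (n - 1)) y := by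
      simpa using hasDerivAt_pow n y
    have h2 : HasDerivAt (fun y : ℝ => Real.exp (-c * (y - x)))
        (Real.exp (-c * (y - x)) * (-c)) y := by
      have : HasDerivAt (fun y : ℝ => -c * (y - x)) (-c) y := by
        simpa using (((hasDerivAt_id y).sub_const x).const_mul (-c))
      exact this.exp
    have hd := (h1.mul h2).neg
    refine HasDerivAt.congr_deriv hd ?_
    symm
    have hyn : y ^ n = y ^ (n - 1) * y := by
      conv_lhs => rw [← Nat.sub_add_cancel hn, pow_succ]
    rw [hyn]
    have hkey : (y - a) * c = c * y - (n : ℝ) := by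
      rw [mul_comm, mul_sub, hca]
    linear_combination y ^ (n - 1) * Real.exp (-c * (y - x)) * hkey
  have g'pos : ∀ y ∈ Set.Ioi a, 0 ≤ (y - a) * y ^ (n - 1) * (c * Real.exp (-c * (y - x))) := by
    intro y hy
    have hy' : a < y := hy
    have hy0 : (0:ℝ) ≤ y := le_of_lt (hapos.trans hy')
    exact mul_nonneg (mul_nonneg (sub_nonneg.2 hy'.le) (pow_nonneg hy0 _)) (by positivity)
  have hlim : Filter.Tendsto g Filter.atTop (nhds 0) := by
    have hcomp : Filter.Tendsto (fun y : ℝ => c * y) Filter.atTop Filter.atTop :=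
      Filter.tendsto_id.const_mul_atTop hc
    have h := (Real.tendsto_pow_mul_exp_neg_atTop_nhds_zero n).comp hcomp
    have h2 := (h.const_mul ((c⁻¹) ^ n * Real.exp (c * x))).neg
    simp only [mul_zero, neg_zero] at h2
    refine h2.congr fun y => ?_
    simp only [Function.comp, hg]
    congr 1
    have hE : Real.exp (-c * (y - x)) = Real.exp (c * x) * Real.exp (-(c * y)) := by
      rw [← Real.exp_add]; ring_nf
    rw [hE, mul_pow]
    field_simp
    ring
    rw [← mul_pow, mul_inv_cancel₀ hc.ne', one_pow, one_mul]
  have key := integral_Ioi_of_hasDerivAt_of_nonneg'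
    (g' := fun y => (y - a) * y ^ (n - 1) * (c * Real.exp (-c * (y - x)))) hderiv g'pos hlim
  rw [key, hg]
  have hE2 : Real.exp (-c * (a - x)) = Real.exp (-(n:ℝ)) * Real.exp (c * x) := by
    rw [← Real.exp_add]
    congr 1
    rw [mul_sub, neg_mul, neg_mul, hca]
    ring
  simp only [zero_sub, neg_neg]
  rw [hE2]; ring
end

section
/- Let n ≥ 1 and let (Q_k)_{k=0}^{n} be real monic polynomials with deg Q_k = k, Q_0 = 1, and derivative of Q_k equal to k·Q_{k−1} for 1 ≤ k ≤ n. Suppose that for each 1 ≤ k ≤ n, Q_k has a unique zero x_k in (0, ∞) and Q_k(x) < 0 for all x ∈ (0, x_k). Then x_1 ≤ x_2 ≤ … ≤ x_n, and consequently Q_k(x_n) ≥ 0 for every 0 ≤ k ≤ n. -/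
open Polynomial

/-- Monotonicity of the positive zeros of an Appell-type sequence of monic
polynomials: if each `Q_k` (for `1 ≤ k ≤ n`) has a unique positive zero `x_k`
and is strictly negative on `(0, x_k)`, then `x_1 ≤ x_2 ≤ … ≤ x_n` and
consequently `Q_k(x_n) ≥ 0` for all `0 ≤ k ≤ n`. -/
theorem appell_zeros_monotone
    (n : ℕ) (hn : 1 ≤ n) (Q : ℕ → Polynomial ℝ)
    (hmonic : ∀ k ≤ n, (Q k).Monic)
    (hdeg : ∀ k ≤ n, (Q k).natDegree = k)
    (hQ0 : Q 0 = 1)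
    (hQderiv : ∀ k, 1 ≤ k → k ≤ n → derivative (Q k) = (k : ℝ) • Q (k - 1))
    (x : ℕ → ℝ)
    (hxpos : ∀ k, 1 ≤ k → k ≤ n → 0 < x k)
    (hzero : ∀ k, 1 ≤ k → k ≤ n → (Q k).eval (x k) = 0)
    (huniq : ∀ k, 1 ≤ k → k ≤ n → ∀ y, 0 < y → (Q k).eval y = 0 → y = x k)
    (hneg : ∀ k, 1 ≤ k → k ≤ n → ∀ y ∈ Set.Ioo 0 (x k), (Q k).eval y < 0) :
    (∀ j k, 1 ≤ j → j ≤ k → k ≤ n → x j ≤ x k) ∧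
      (∀ k ≤ n, 0 ≤ (Q k).eval (x n)) := by
  -- Helper: if Q_k is negative at a positive point c, then c < x k.
  have hlt : ∀ k, 1 ≤ k → k ≤ n → ∀ c, 0 < c → (Q k).eval c < 0 → c < x k := by
    intro k hk1 hkn c hc hcneg
    -- Q k tends to +∞
    have hdegpos : 0 < (Q k).degree := by
      rw [← Polynomial.natDegree_pos_iff_degree_pos, hdeg k hkn]; exact hk1
    have htend : Filter.Tendsto (fun t => (Q k).eval t) Filter.atTop Filter.atTop :=
      (Q k).tendsto_atTop_of_leadingCoeff_nonneg hdegpos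
        (by rw [(hmonic k hkn).leadingCoeff]; norm_num)
    obtain ⟨z, hz⟩ := ((htend.eventually_gt_atTop 0).and (Filter.eventually_ge_atTop c)).exists
    obtain ⟨hzpos, hcz⟩ := hz
    have h0 : (0 : ℝ) ∈ Set.Icc ((Q k).eval c) ((Q k).eval z) :=
      ⟨le_of_lt hcneg, le_of_lt hzpos⟩
    obtain ⟨y, hy, hye⟩ := intermediate_value_Icc hcz ((Q k).continuous.continuousOn) h0
    have hy0 : 0 < y := lt_of_lt_of_le hc hy.1
    have hyx : y = x k := huniq k hk1 hkn y hy0 hye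
    have : c ≤ x k := hyx ▸ hy.1
    rcases lt_or_eq_of_le this with h | h
    · exact h
    · exfalso; rw [h, hzero k hk1 hkn] at hcneg; exact lt_irrefl 0 hcneg
  -- Consecutive monotonicity
  have hstep : ∀ k, 1 ≤ k → k + 1 ≤ n → x k ≤ x (k + 1) := by
    intro k hk1 hkn
    by_contra h
    push_neg at h
    have hk1n : 1 ≤ k + 1 := Nat.le_add_left 1 k
    have hkn' : k ≤ n := Nat.le_of_succ_le hkn
    -- Q (k+1) is strictly decreasing on [x (k+1), x k]
    have hanti : StrictAntiOn (fun t => (Q (k + 1)).eval t) (Set.Icc (x (k + 1)) (x k)) := by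
      apply strictAntiOn_of_deriv_neg (convex_Icc _ _) ((Q (k + 1)).continuous.continuousOn)
      intro y hy
      rw [interior_Icc] at hy
      rw [Polynomial.deriv, hQderiv (k + 1) hk1n hkn]
      simp only [Nat.add_sub_cancel, Polynomial.eval_smul, smul_eq_mul]
      have hy0 : 0 < y := lt_trans (hxpos (k + 1) hk1n hkn) hy.1
      have hQky : (Q k).eval y < 0 := hneg k hk1 hkn' y ⟨hy0, hy.2⟩
      have : (0 : ℝ) < (k + 1 : ℕ) := by positivity
      exact mul_neg_of_pos_of_neg this hQky
    have hmem1 : x (k + 1) ∈ Set.Icc (x (k + 1)) (x k) := ⟨le_refl _, le_of_lt h⟩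
    have hmem2 : x k ∈ Set.Icc (x (k + 1)) (x k) := ⟨le_of_lt h, le_refl _⟩
    have hval : (Q (k + 1)).eval (x k) < (Q (k + 1)).eval (x (k + 1)) :=
      hanti hmem1 hmem2 h
    rw [hzero (k + 1) hk1n hkn] at hval
    have := hlt (k + 1) hk1n hkn (x k) (hxpos k hk1 hkn') hval
    exact absurd h (not_lt.mpr (le_of_lt this))
  -- General monotonicity
  have hmono : ∀ j k, 1 ≤ j → j ≤ k → k ≤ n → x j ≤ x k := by
    intro j k hj1 hjk hkn
    induction k, hjk using Nat.le_induction with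
    | base => exact le_refl _
    | succ m hm ih =>
      have hmn : m ≤ n := Nat.le_of_succ_le hkn
      exact le_trans (ih hmn) (hstep m (le_trans hj1 hm) hkn)
  refine ⟨hmono, ?_⟩
  intro k hkn
  rcases Nat.eq_zero_or_pos k with rfl | hk1
  · rw [hQ0]; simp
  · by_contra h
    push_neg at h
    have := hlt k hk1 hkn (x n) (hxpos n hn le_rfl) h
    exact absurd this (not_lt.mpr (hmono k n hk1 hkn le_rfl))
end

section
/- Let r > 0, n ≥ 2, set x* = n/√(2r), and let x ∈ ℝ with x ≤ x*. Then r · ∫_{x*}^{∞} (1/√(2r)) · e^{−√(2r)·(y−x)} · (y² − n(n−1)/(2r)) · y^{n−2} dy = (n/√(2r))^n · e^{−n} · e^{√(2r)·x}. (This verifies, for Brownian motion, that the value function V of the optimal stopping problem with reward (x⁺)^n satisfies V(x) = r ∫_{x*}^{∞} G_r(x,y) Q_n^{(X_T)}(y) dy, where G_r(x,y) = (1/√(2r)) e^{−√(2r)|x−y|} is the r-resolvent kernel of Brownian motion and Q_n^{(X_T)}(y) = (y² − n(n−1)/(2r)) y^{n−2} is the n-th Appell polynomial of X_T, a Laplace(√(2r))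 random variable; the representing measure of V is σ(dy) = r·Q_n^{(X_T)}(y) dy on [x*, ∞).) -/
open MeasureTheory

/-- For Brownian motion, the value function of the optimal stopping problem with
reward `(x⁺)^n` equals the integral of the resolvent kernel against its
representing measure `σ(dy) = r Q_n^{(X_T)}(y) dy` on `[x*, ∞)`: for `r > 0`,
`n ≥ 2`, `x* = n/√(2r)` and `x ≤ x*`,
`r ∫_{x*}^∞ (1/√(2r)) e^{-√(2r)(y-x)} (y² - n(n-1)/(2r)) y^{n-2} dy
  = (n/√(2r))^n e^{-n} e^{√(2r) x}`. -/
theorem brownian_value_function_representation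
    (r : ℝ) (hr : 0 < r) (n : ℕ) (hn : 2 ≤ n) (x : ℝ)
    (hx : x ≤ (n : ℝ) / Real.sqrt (2 * r)) :
    r * ∫ y in Set.Ioi ((n : ℝ) / Real.sqrt (2 * r)),
          (1 / Real.sqrt (2 * r)) * Real.exp (-Real.sqrt (2 * r) * (y - x)) *
            ((y ^ 2 - (n : ℝ) * ((n : ℝ) - 1) / (2 * r)) * y ^ (n - 2))
      = ((n : ℝ) / Real.sqrt (2 * r)) ^ n * Real.exp (-(n : ℝ)) *
          Real.exp (Real.sqrt (2 * r) * x) := by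
  set c := Real.sqrt (2 * r) with hc
  have hc0 : 0 < c := Real.sqrt_pos.2 (by linarith)
  have hc2 : c ^ 2 = 2 * r := Real.sq_sqrt (by linarith)
  set a : ℝ := (n : ℝ) / c with ha
  have ha0 : 0 < a := div_pos (by exact_mod_cast by omega) hc0
  -- antiderivative
  set F : ℝ → ℝ := fun y => -(Real.exp (-c * (y - x)) * (y ^ n / c + n * y ^ (n - 1) / c ^ 2))
    with hF
  set g : ℝ → ℝ := fun y =>
    Real.exp (-c * (y - x)) * ((y ^ 2 - (n : ℝ) * ((n : ℝ) - 1) / (2 * r)) * y ^ (n - 2)) with hg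
  have hder : ∀ y : ℝ, HasDerivAt F (g y) y := by
    intro y
    have he : HasDerivAt (fun y : ℝ => Real.exp (-c * (y - x))) (-c * Real.exp (-c * (y - x))) y := by
      have h1 : HasDerivAt (fun y : ℝ => -c * (y - x)) (-c) y := by
        simpa using ((hasDerivAt_id y).sub_const x).const_mul (-c)
      simpa [mul_comm] using h1.exp
    have hp : HasDerivAt (fun y : ℝ => y ^ n / c + n * y ^ (n - 1) / c ^ 2)
        ((n : ℝ) * y ^ (n - 1) / c + (n : ℝ) * ((n : ℝ) - 1) * y ^ (n - 2) / c ^ 2) y := by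
      have h1 : HasDerivAt (fun y : ℝ => y ^ n / c) ((n : ℝ) * y ^ (n - 1) / c) y :=
        (hasDerivAt_pow n y).div_const c
      have h2 : HasDerivAt (fun y : ℝ => (n : ℝ) * y ^ (n - 1) / c ^ 2)
          ((n : ℝ) * ((n : ℝ) - 1) * y ^ (n - 2) / c ^ 2) y := by
        have := ((hasDerivAt_pow (n - 1) y).const_mul (n : ℝ)).div_const (c ^ 2)
        have hcast : ((n - 1 : ℕ) : ℝ) = (n : ℝ) - 1 := by
          have : (1 : ℕ) ≤ n := by omega
          push_cast [this]; ring
        have hexp : n - 1 - 1 = n - 2 := by omega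
        rw [hcast, hexp] at this
        rw [← mul_assoc] at this; exact this
      exact h1.add h2
    have := he.mul hp
    have hmain : HasDerivAt F (-((-c * Real.exp (-c * (y - x))) *
        (y ^ n / c + (n : ℝ) * y ^ (n - 1) / c ^ 2) + Real.exp (-c * (y - x)) *
        ((n : ℝ) * y ^ (n - 1) / c + (n : ℝ) * ((n : ℝ) - 1) * y ^ (n - 2) / c ^ 2))) y := this.neg
    convert hmain using 1
    have hy2 : y ^ 2 * y ^ (n - 2) = y ^ n := by
      rw [← pow_add]; congr 1; omega
    rw [hg]; beta_reduce; rw [← hc2, sub_mul, hy2]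
    field_simp
    ring
  -- limit at infinity
  have hk : ∀ k : ℕ, Filter.Tendsto (fun y : ℝ => Real.exp (-c * (y - x)) * y ^ k)
      Filter.atTop (nhds 0) := by
    intro k
    have hcy : Filter.Tendsto (fun y : ℝ => c * y) Filter.atTop Filter.atTop :=
      Filter.tendsto_id.const_mul_atTop hc0
    have h0 := ((Real.tendsto_pow_mul_exp_neg_atTop_nhds_zero k).comp hcy).const_mul
      (Real.exp (c * x) / c ^ k)
    rw [mul_zero] at h0
    convert h0 using 2 with y
    have h1 : -c * (y - x) = c * x + -(c * y) := by ring
    rw [Function.comp, h1, Real.exp_add, mul_pow]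
    field_simp
  have htend : Filter.Tendsto F Filter.atTop (nhds 0) := by
    have h1 := ((hk n).div_const c).add (((hk (n - 1)).const_mul (n : ℝ)).div_const (c ^ 2))
    rw [zero_div, mul_zero, zero_div, add_zero] at h1
    have h2 := h1.neg
    rw [neg_zero] at h2
    convert h2 using 2 with y
    rw [hF]
    ring
  -- nonnegativity of the integrand on `(a, ∞)`
  have hnonneg : ∀ y ∈ Set.Ioi a, 0 ≤ g y := by
    intro y hy
    rw [Set.mem_Ioi] at hy
    have hy0 : 0 < y := lt_trans ha0 hy
    have hya : (n : ℝ) / c < y := hy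
    have hyn : (n : ℝ) ≤ c * y := by
      rw [div_lt_iff₀ hc0] at hya
      nlinarith
    have hKy : (n : ℝ) * ((n : ℝ) - 1) / (2 * r) ≤ y ^ 2 := by
      rw [← hc2, div_le_iff₀ (by positivity)]
      have hn1 : (1 : ℝ) ≤ (n : ℝ) := by exact_mod_cast by omega
      nlinarith
    rw [hg]
    exact mul_nonneg (Real.exp_nonneg _)
      (mul_nonneg (by linarith) (pow_nonneg hy0.le _))
  have hint : ∫ y in Set.Ioi a, g y = 0 - F a :=
    integral_Ioi_of_hasDerivAt_of_nonneg (hder a).continuousAt.continuousWithinAt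
      (fun y _ => hder y) hnonneg htend
  have h1 : (∫ y in Set.Ioi a,
        (1 / c) * Real.exp (-c * (y - x)) * ((y ^ 2 - (n : ℝ) * ((n : ℝ) - 1) / (2 * r)) * y ^ (n - 2)))
      = (1 / c) * ∫ y in Set.Ioi a, g y := by
    rw [← integral_const_mul]
    congr 1 with y
    rw [hg]
    ring
  rw [h1, hint, hF]
  beta_reduce
  have hca : c * a = (n : ℝ) := by rw [ha]; field_simp
  have hexp : Real.exp (-c * (a - x)) = Real.exp (-(n : ℝ)) * Real.exp (c * x) := by
    rw [← Real.exp_add]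
    congr 1
    rw [show -c * (a - x) = -(c * a) + c * x by ring, hca]
  have hna : (n : ℝ) * a ^ (n - 1) = c * a ^ n := by
    have h2 : a ^ n = a * a ^ (n - 1) := by
      rw [← pow_succ']; congr 1; omega
    rw [h2, ← mul_assoc, hca]
  rw [hexp, hna, show r = c ^ 2 / 2 by linarith]
  field_simp
  ring
end
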